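/- Hintikka's Lemma for T_1: if Γ is a Hintikka set of signed formulas for T_1, then there exists a valuation ν ∈ F_{C_1} such that every signed formula L(φ) ∈ Γ is true in ν (i.e., ν(φ) = L). -/
import Mathlib


/-- Formulas over the signature Σ (¬ unary; ∧, ∨, → binary). -/
inductive PFs : Type
  | var : ℕ → PFs
  | neg : PFs → PFs
  | and : PFs → PFs → PFs
  | or : PFs → PFs → PFs
  | imp : PFs → PFs → PFs

/-- The three truth-values `F`, `t`, `T`. -/
inductive V3 : Type
  | F | t | T

/-- Designated values `D = {t, T}`. -/
def D3 : Set V3 := {V3.t, V3.T}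

/-- ¬̃ of `A_{C_1}` (the Σ-reduct of `A_Cila`). -/
def cNeg : V3 → Set V3
  | .F => {V3.T}
  | .t => {V3.t, V3.T}
  | .T => {V3.F}

/-- ∧̃ of `A_{C_1}`. -/
def cAnd : V3 → V3 → Set V3
  | .F, _ => {V3.F}
  | _, .F => {V3.F}
  | .T, .T => {V3.T}
  | _, _ => {V3.t, V3.T}

/-- ∨̃ of `A_{C_1}`. -/
def cOr : V3 → V3 → Set V3
  | .F, .F => {V3.F}
  | .F, .T => {V3.T}
  | .T, .F => {V3.T}
  | .T, .T => {V3.T}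
  | _, _ => {V3.t, V3.T}

/-- →̃ of `A_{C_1}`. -/
def cImp : V3 → V3 → Set V3
  | .F, .F => {V3.T}
  | .F, .T => {V3.T}
  | .t, .F => {V3.F}
  | .T, .F => {V3.F}
  | .T, .T => {V3.T}
  | _, _ => {V3.t, V3.T}

/-- `ν ∈ F_{C_1}`: a multialgebra homomorphism into `A_{C_1}` with
`ν(α) = t → ν(α ∧ ¬α) = T`. -/
def FC1 (ν : PFs → V3) : Prop :=
  ((∀ α, ν (PFs.neg α) ∈ cNeg (ν α)) ∧
   (∀ α β, ν (PFs.and α β) ∈ cAnd (ν α) (ν β)) ∧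
   (∀ α β, ν (PFs.or α β) ∈ cOr (ν α) (ν β)) ∧
   (∀ α β, ν (PFs.imp α β) ∈ cImp (ν α) (ν β))) ∧
  (∀ α, ν α = V3.t → ν (PFs.and α (PFs.neg α)) = V3.T)


/-- Membership of a signed formula in a set. -/
def memL (Γ : Set (V3 × PFs)) (L : V3) (φ : PFs) : Prop := (L, φ) ∈ Γ

/-- `Γ` is a Hintikka set for the tableau system `𝕋₁`. -/
def Hintikka (Γ : Set (V3 × PFs)) : Prop :=
  Γ.Nonempty ∧
  (∀ φ L L', memL Γ L φ → memL Γ L' φ → L = L') ∧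
  (∀ φ, ¬ memL Γ V3.t (PFs.and φ (PFs.neg φ))) ∧
  (∀ φ, memL Γ V3.T (PFs.neg φ) → (memL Γ V3.F φ ∨ memL Γ V3.t φ)) ∧
  (∀ φ, memL Γ V3.t (PFs.neg φ) → memL Γ V3.t φ) ∧
  (∀ φ, memL Γ V3.F (PFs.neg φ) → memL Γ V3.T φ) ∧
  (∀ φ ψ, memL Γ V3.T (PFs.and φ ψ) →
    ((memL Γ V3.T φ ∧ memL Γ V3.T ψ) ∨ (memL Γ V3.T φ ∧ memL Γ V3.t ψ) ∨
     (memL Γ V3.t φ ∧ memL Γ V3.T ψ) ∨ (memL Γ V3.t φ ∧ memL Γ V3.t ψ))) ∧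
  (∀ φ ψ, memL Γ V3.t (PFs.and φ ψ) →
    ((memL Γ V3.T φ ∧ memL Γ V3.t ψ) ∨ (memL Γ V3.t φ ∧ memL Γ V3.T ψ) ∨
     (memL Γ V3.t φ ∧ memL Γ V3.t ψ))) ∧
  (∀ φ ψ, memL Γ V3.F (PFs.and φ ψ) → (memL Γ V3.F φ ∨ memL Γ V3.F ψ)) ∧
  (∀ φ ψ, memL Γ V3.T (PFs.or φ ψ) →
    (memL Γ V3.T φ ∨ memL Γ V3.t φ ∨ memL Γ V3.T ψ ∨ memL Γ V3.t ψ)) ∧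
  (∀ φ ψ, memL Γ V3.t (PFs.or φ ψ) → (memL Γ V3.t φ ∨ memL Γ V3.t ψ)) ∧
  (∀ φ ψ, memL Γ V3.F (PFs.or φ ψ) → (memL Γ V3.F φ ∧ memL Γ V3.F ψ)) ∧
  (∀ φ ψ, memL Γ V3.T (PFs.imp φ ψ) →
    (memL Γ V3.F φ ∨ memL Γ V3.T ψ ∨ memL Γ V3.t ψ)) ∧
  (∀ φ ψ, memL Γ V3.t (PFs.imp φ ψ) →
    ((memL Γ V3.t φ ∧ memL Γ V3.T ψ) ∨ memL Γ V3.t ψ)) ∧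
  (∀ φ ψ, memL Γ V3.F (PFs.imp φ ψ) →
    ((memL Γ V3.T φ ∧ memL Γ V3.F ψ) ∨ (memL Γ V3.t φ ∧ memL Γ V3.F ψ)))


open Classical in
noncomputable def lab (Γ : Set (V3 × PFs)) (φ : PFs) : Option V3 :=
  if h : ∃ L, (L, φ) ∈ Γ then some h.choose else none

lemma lab_mem {Γ : Set (V3 × PFs)} {φ L} (h : lab Γ φ = some L) : (L, φ) ∈ Γ := by
  unfold lab at h
  split at h
  · next hx => cases h; exact hx.choose_spec
  · simp at h

lemma lab_of_mem {Γ : Set (V3 × PFs)} {φ L}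
    (hU : ∀ φ L L', memL Γ L φ → memL Γ L' φ → L = L')
    (h : (L, φ) ∈ Γ) : lab Γ φ = some L := by
  unfold lab
  split
  · next hx => exact congrArg some (hU φ _ _ hx.choose_spec h)
  · next hx => exact absurd ⟨L, h⟩ hx

def dNeg : V3 → V3 | .F => .T | .t => .T | .T => .F
def dAnd : V3 → V3 → V3 | .F, _ => .F | _, .F => .F | _, _ => .T
def dOr : V3 → V3 → V3 | .F, .F => .F | _, _ => .T
def dImp : V3 → V3 → V3 | .t, .F => .F | .T, .F => .F | _, _ => .T

noncomputable def nu (Γ : Set (V3 × PFs)) : PFs → V3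
  | .var n => (lab Γ (.var n)).getD .F
  | .neg φ => (lab Γ (.neg φ)).getD (dNeg (nu Γ φ))
  | .and φ ψ => (lab Γ (.and φ ψ)).getD (dAnd (nu Γ φ) (nu Γ ψ))
  | .or φ ψ => (lab Γ (.or φ ψ)).getD (dOr (nu Γ φ) (nu Γ ψ))
  | .imp φ ψ => (lab Γ (.imp φ ψ)).getD (dImp (nu Γ φ) (nu Γ ψ))

lemma nuEq {Γ : Set (V3 × PFs)}
    (hU : ∀ φ L L', memL Γ L φ → memL Γ L' φ → L = L')
    {L φ} (h : (L, φ) ∈ Γ) : nu Γ φ = L := by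
  cases φ <;> simp [nu, lab_of_mem hU h]
/-- Hintikka's Lemma for `𝕋₁`: if `Γ` is a Hintikka set of
signed formulas for `𝕋₁`, then there is a valuation `ν ∈ F_{C_1}` making every
signed formula `L(φ) ∈ Γ` true, i.e. `ν φ = L`. -/
theorem stmt_17 (Γ : Set (V3 × PFs)) (hΓ : Hintikka Γ) :
    ∃ ν : PFs → V3, FC1 ν ∧ ∀ p ∈ Γ, ν p.2 = p.1 := by
  obtain ⟨-, hU, h3, h4, h5, h6, h7, h8, h9, h10, h11, h12, h13, h14, h15⟩ := hΓ
  refine ⟨nu Γ, ⟨⟨?_, ?_, ?_, ?_⟩, ?_⟩, fun p hp => nuEq hU hp⟩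
  · -- neg
    intro α
    cases h : lab Γ (PFs.neg α) with
    | none =>
      have hv : nu Γ (PFs.neg α) = dNeg (nu Γ α) := by simp [nu, h]
      rw [hv]; cases nu Γ α <;> simp [dNeg, cNeg]
    | some L =>
      have hm := lab_mem h
      have hv : nu Γ (PFs.neg α) = L := by simp [nu, h]
      rw [hv]
      cases L with
      | T =>
        rcases h4 α hm with hf | ht
        · rw [nuEq hU hf]; simp [cNeg]
        · rw [nuEq hU ht]; simp [cNeg]
      | t => rw [nuEq hU (h5 α hm)]; simp [cNeg]
      | F => rw [nuEq hU (h6 α hm)]; simp [cNeg]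
  · -- and
    intro α β
    cases h : lab Γ (PFs.and α β) with
    | none =>
      have hv : nu Γ (PFs.and α β) = dAnd (nu Γ α) (nu Γ β) := by simp [nu, h]
      rw [hv]; cases nu Γ α <;> cases nu Γ β <;> simp [dAnd, cAnd]
    | some L =>
      have hm := lab_mem h
      have hv : nu Γ (PFs.and α β) = L := by simp [nu, h]
      rw [hv]
      cases L with
      | T =>
        rcases h7 α β hm with ⟨ha, hb⟩ | ⟨ha, hb⟩ | ⟨ha, hb⟩ | ⟨ha, hb⟩ <;>
          rw [nuEq hU ha, nuEq hU hb] <;> simp [cAnd]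
      | t =>
        rcases h8 α β hm with ⟨ha, hb⟩ | ⟨ha, hb⟩ | ⟨ha, hb⟩ <;>
          rw [nuEq hU ha, nuEq hU hb] <;> simp [cAnd]
      | F =>
        rcases h9 α β hm with ha | hb
        · rw [nuEq hU ha]; simp [cAnd]
        · rw [nuEq hU hb]; cases nu Γ α <;> simp [cAnd]
  · -- or
    intro α β
    cases h : lab Γ (PFs.or α β) with
    | none =>
      have hv : nu Γ (PFs.or α β) = dOr (nu Γ α) (nu Γ β) := by simp [nu, h]
      rw [hv]; cases nu Γ α <;> cases nu Γ β <;> simp [dOr, cOr]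
    | some L =>
      have hm := lab_mem h
      have hv : nu Γ (PFs.or α β) = L := by simp [nu, h]
      rw [hv]
      cases L with
      | T =>
        rcases h10 α β hm with ha | ha | hb | hb
        · rw [nuEq hU ha]; cases nu Γ β <;> simp [cOr]
        · rw [nuEq hU ha]; cases nu Γ β <;> simp [cOr]
        · rw [nuEq hU hb]; cases nu Γ α <;> simp [cOr]
        · rw [nuEq hU hb]; cases nu Γ α <;> simp [cOr]
      | t =>
        rcases h11 α β hm with ha | hb
        · rw [nuEq hU ha]; cases nu Γ β <;> simp [cOr]
        · rw [nuEq hU hb]; cases nu Γ α <;> simp [cOr]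
      | F =>
        obtain ⟨ha, hb⟩ := h12 α β hm
        rw [nuEq hU ha, nuEq hU hb]; simp [cOr]
  · -- imp
    intro α β
    cases h : lab Γ (PFs.imp α β) with
    | none =>
      have hv : nu Γ (PFs.imp α β) = dImp (nu Γ α) (nu Γ β) := by simp [nu, h]
      rw [hv]; cases nu Γ α <;> cases nu Γ β <;> simp [dImp, cImp]
    | some L =>
      have hm := lab_mem h
      have hv : nu Γ (PFs.imp α β) = L := by simp [nu, h]
      rw [hv]
      cases L with
      | T =>
        rcases h13 α β hm with ha | hb | hb
        · rw [nuEq hU ha]; cases nu Γ β <;> simp [cImp]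
        · rw [nuEq hU hb]; cases nu Γ α <;> simp [cImp]
        · rw [nuEq hU hb]; cases nu Γ α <;> simp [cImp]
      | t =>
        rcases h14 α β hm with ⟨ha, hb⟩ | hb
        · rw [nuEq hU ha, nuEq hU hb]; simp [cImp]
        · rw [nuEq hU hb]; cases nu Γ α <;> simp [cImp]
      | F =>
        rcases h15 α β hm with ⟨ha, hb⟩ | ⟨ha, hb⟩ <;>
          rw [nuEq hU ha, nuEq hU hb] <;> simp [cImp]
  · -- t-condition
    intro α hα
    have hna : nu Γ (PFs.neg α) ∈ cNeg (nu Γ α) := by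
      cases h : lab Γ (PFs.neg α) with
      | none =>
        have hv : nu Γ (PFs.neg α) = dNeg (nu Γ α) := by simp [nu, h]
        rw [hv]; cases nu Γ α <;> simp [dNeg, cNeg]
      | some L =>
        have hm := lab_mem h
        have hv : nu Γ (PFs.neg α) = L := by simp [nu, h]
        rw [hv]
        cases L with
        | T =>
          rcases h4 α hm with hf | ht
          · rw [nuEq hU hf]; simp [cNeg]
          · rw [nuEq hU ht]; simp [cNeg]
        | t => rw [nuEq hU (h5 α hm)]; simp [cNeg]
        | F => rw [nuEq hU (h6 α hm)]; simp [cNeg]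
    rw [hα] at hna
    have hnaF : nu Γ (PFs.neg α) ≠ V3.F := by
      intro hcon; rw [hcon] at hna; simp [cNeg] at hna
    cases h : lab Γ (PFs.and α (PFs.neg α)) with
    | none =>
      have hv : nu Γ (PFs.and α (PFs.neg α)) = dAnd (nu Γ α) (nu Γ (PFs.neg α)) := by
        simp [nu, h]
      rw [hv, hα]
      cases hb : nu Γ (PFs.neg α) <;> simp_all [dAnd]
    | some L =>
      have hm := lab_mem h
      have hv : nu Γ (PFs.and α (PFs.neg α)) = L := by simp [nu, h]
      rw [hv]
      cases L with
      | T => rfl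
      | t => exact absurd hm (h3 α)
      | F =>
        rcases h9 α (PFs.neg α) hm with ha | hb
        · rw [nuEq hU ha] at hα; exact absurd hα (by simp)
        · exact absurd (nuEq hU hb) hnaF
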